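/- arXiv:1404.7189 — 4 statements merged into one kernel-verified Lean document; each statement's English description precedes it below -/
import Mathlib

section
/- Let $p\in(0,1)$, let $Z_1,\dots,Z_m$ be i.i.d. random variables with $Z_i = 1+G_i$ where $G_i$ is geometric with parameter $p$ (i.e. $\Pr[G_i=k]=(1-p)^k p$ for $k\ge 0$), and let $\kappa \ge 1/p$. Then $\Pr[Z_1+\cdots+Z_m \ge \kappa m] \le f(2-\kappa)^m$, where $f(x) = (2-x)^{2-x} p (1-p)^{1-x}(1-x)^{x-1}$. -/
/-!
Chernoff's bound: for `t ≥ 0`, `ℙ[∑ Zᵢ ≥ κ m] ≤ (e^{-tκ} 𝔼[e^{t Z₁}])^m`, and the moment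
generating function of `1 + G` is the geometric series `p eᵗ / (1 - (1 - p) eᵗ)`.
Choosing `eᵗ = (κ - 1) / (κ (1 - p))`, which is `≥ 1` exactly because `κ ≥ 1 / p`,
the base of the bound becomes `κ^κ p (1 - p)^(κ - 1) (κ - 1)^(1 - κ) = f(2 - κ)`.
-/

open MeasureTheory ProbabilityTheory Real Set

/-- The function `f` from the paper, with real exponents (`0 ^ 0 = 1` by `rpow` convention). -/
noncomputable def paperF (p x : ℝ) : ℝ :=
  (2 - x) ^ (2 - x) * p * (1 - p) ^ (1 - x) * (1 - x) ^ (x - 1)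

section ShiftedGeometric

variable {Ω : Type*} [MeasurableSpace Ω] {μ : Measure Ω} {G : Ω → ℕ} {p t : ℝ}

lemma lintegral_exp_mul_one_add_of_geometric (hG : Measurable G) (hp : p ∈ Icc (0 : ℝ) 1)
    (hdist : ∀ k, μ {ω | G ω = k} = ENNReal.ofReal ((1 - p) ^ k * p))
    (ht : (1 - p) * exp t < 1) :
    ∫⁻ ω, ENNReal.ofReal (exp (t * (1 + G ω))) ∂μ =
      ENNReal.ofReal (p * exp t / (1 - (1 - p) * exp t)) := by
  have hq : 0 ≤ (1 - p) * exp t := mul_nonneg (by linarith [hp.2]) (exp_nonneg t)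
  have hterm (k : ℕ) : ENNReal.ofReal (exp (t * (1 + k))) * μ.map G {k} =
      ENNReal.ofReal (p * exp t) * ENNReal.ofReal ((1 - p) * exp t) ^ k := by
    rw [Measure.map_apply hG (measurableSet_singleton k)]
    change _ * μ {ω | G ω = k} = _
    rw [hdist, ← ENNReal.ofReal_pow hq, ← ENNReal.ofReal_mul (exp_nonneg _),
      ← ENNReal.ofReal_mul (mul_nonneg hp.1 (exp_nonneg t))]
    congr 1
    rw [mul_add, mul_one, exp_add, mul_comm t, exp_nat_mul, mul_pow]
    ring
  calc ∫⁻ ω, ENNReal.ofReal (exp (t * (1 + G ω))) ∂μ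
      = ∫⁻ k, ENNReal.ofReal (exp (t * (1 + k))) ∂μ.map G :=
        (lintegral_map (f := fun k : ℕ => ENNReal.ofReal (exp (t * (1 + k))))
          measurable_from_nat hG).symm
    _ = ∑' k : ℕ, ENNReal.ofReal (p * exp t) * ENNReal.ofReal ((1 - p) * exp t) ^ k := by
        rw [lintegral_countable']
        exact tsum_congr hterm
    _ = ENNReal.ofReal (p * exp t / (1 - (1 - p) * exp t)) := by
        rw [ENNReal.tsum_mul_left, ENNReal.tsum_geometric, ← ENNReal.ofReal_one,
          ← ENNReal.ofReal_sub _ hq, ← ENNReal.ofReal_inv_of_pos (by linarith),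
          ← ENNReal.ofReal_mul (mul_nonneg hp.1 (exp_nonneg t)), div_eq_mul_inv]

lemma integrable_exp_mul_one_add_of_geometric (hG : Measurable G) (hp : p ∈ Icc (0 : ℝ) 1)
    (hdist : ∀ k, μ {ω | G ω = k} = ENNReal.ofReal ((1 - p) ^ k * p))
    (ht : (1 - p) * exp t < 1) :
    Integrable (fun ω => exp (t * (1 + G ω))) μ := by
  refine ⟨by fun_prop, ?_⟩
  rw [hasFiniteIntegral_iff_ofReal (.of_forall fun ω => exp_nonneg _),
    lintegral_exp_mul_one_add_of_geometric hG hp hdist ht]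
  exact ENNReal.ofReal_lt_top

lemma mgf_one_add_of_geometric (hG : Measurable G) (hp : p ∈ Icc (0 : ℝ) 1)
    (hdist : ∀ k, μ {ω | G ω = k} = ENNReal.ofReal ((1 - p) ^ k * p))
    (ht : (1 - p) * exp t < 1) :
    mgf (fun ω => 1 + (G ω : ℝ)) μ t = p * exp t / (1 - (1 - p) * exp t) := by
  rw [mgf, integral_eq_lintegral_of_nonneg_ae (.of_forall fun ω => exp_nonneg _) (by fun_prop),
    lintegral_exp_mul_one_add_of_geometric hG hp hdist ht, ENNReal.toReal_ofReal]
  exact div_nonneg (mul_nonneg hp.1 (exp_nonneg t)) (by linarith)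

end ShiftedGeometric

lemma iIndepFun.measure_sum_ge_le_pow {Ω : Type*} [MeasurableSpace Ω] {μ : Measure Ω}
    [IsFiniteMeasure μ] {n : ℕ} {X : Fin n → Ω → ℝ} (hX : ∀ i, Measurable (X i))
    (hindep : iIndepFun X μ) {t M : ℝ} (ht : 0 ≤ t)
    (hint : ∀ i, Integrable (fun ω => exp (t * X i ω)) μ) (hM : ∀ i, mgf (X i) μ t = M)
    (a : ℝ) :
    μ.real {ω | a * n ≤ ∑ i, X i ω} ≤ (exp (-t * a) * M) ^ n := by
  have hsum : Integrable (fun ω => exp (t * (∑ i, X i) ω)) μ :=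
    hindep.integrable_exp_mul_sum hX fun i _ => hint i
  calc μ.real {ω | a * n ≤ ∑ i, X i ω}
      = μ.real {ω | a * n ≤ (∑ i, X i) ω} := by simp only [Finset.sum_apply]
    _ ≤ exp (-t * (a * n)) * mgf (∑ i, X i) μ t := measure_ge_le_exp_mul_mgf _ ht hsum
    _ = (exp (-t * a) * M) ^ n := by
        rw [hindep.mgf_sum hX, Finset.prod_congr rfl fun i _ => hM i, Finset.prod_const,
          Finset.card_univ, Fintype.card_fin, mul_pow, ← exp_nat_mul]
        ring_nf

lemma paperF_two_sub_eq {p κ : ℝ} (hp : p ∈ Ioo (0 : ℝ) 1) (hκ : 1 < κ) :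
    paperF p (2 - κ) =
      exp (-log ((κ - 1) / (κ * (1 - p))) * κ) * (p * κ * ((κ - 1) / (κ * (1 - p)))) := by
  obtain ⟨hp0, hp1⟩ := hp
  have hq : 0 < 1 - p := by linarith
  have hκ0 : 0 < κ := by linarith
  have hκ1 : 0 < κ - 1 := by linarith
  rw [neg_mul, exp_neg, mul_comm, ← rpow_def_of_pos (by positivity), paperF,
    div_rpow hκ1.le (by positivity), mul_rpow hκ0.le hq.le,
    show (2 : ℝ) - (2 - κ) = κ by ring, show (1 : ℝ) - (2 - κ) = κ - 1 by ring,
    show 2 - κ - 1 = 1 - κ by ring, rpow_sub hq, rpow_sub hκ1, rpow_one, rpow_one]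
  have := rpow_pos_of_pos hκ0 κ
  have := rpow_pos_of_pos hκ1 κ
  have := rpow_pos_of_pos hq κ
  field_simp

theorem stmt_1 {Ω : Type*} [MeasureSpace Ω] [IsProbabilityMeasure (ℙ : Measure Ω)]
    (p : ℝ) (hp : p ∈ Set.Ioo (0 : ℝ) 1) (m : ℕ)
    (G : Fin m → Ω → ℕ) (hmeas : ∀ i, Measurable (G i))
    (hindep : iIndepFun G ℙ)
    (hdist : ∀ i k, ℙ {ω | G i ω = k} = ENNReal.ofReal ((1 - p) ^ k * p))
    (κ : ℝ) (hκ : 1 / p ≤ κ) :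
    ℙ {ω | κ * m ≤ ∑ i, (1 + (G i ω : ℝ))} ≤ ENNReal.ofReal (paperF p (2 - κ) ^ m) := by
  obtain ⟨hp0, hp1⟩ := hp
  have hκp : 1 ≤ κ * p := by rwa [div_le_iff₀ hp0] at hκ
  have hκ1 : 1 < κ := by nlinarith
  -- `e ^ t = s` is the minimiser of `e ^ (-t κ) * mgf t`.
  set s := (κ - 1) / (κ * (1 - p)) with hs
  have hs1 : 1 ≤ s := by rw [hs, le_div_iff₀ (by nlinarith)]; nlinarith
  have hqs : (1 - p) * exp (log s) = (κ - 1) / κ := by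
    rw [exp_log (by linarith), hs]; field_simp
  have hqs1 : (1 - p) * exp (log s) < 1 := by rw [hqs, div_lt_one (by linarith)]; linarith
  have hM : p * exp (log s) / (1 - (1 - p) * exp (log s)) = p * κ * s := by
    rw [hqs, exp_log (by linarith)]; field_simp; ring
  have hchernoff := iIndepFun.measure_sum_ge_le_pow (μ := ℙ) (fun i => by fun_prop)
    (hindep.comp (fun _ k => 1 + (k : ℝ)) fun _ => measurable_from_nat) (log_nonneg hs1)
    (fun i => integrable_exp_mul_one_add_of_geometric (hmeas i) ⟨hp0.le, hp1.le⟩ (hdist i) hqs1)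
    (fun i => mgf_one_add_of_geometric (hmeas i) ⟨hp0.le, hp1.le⟩ (hdist i) hqs1) κ
  rw [hM, ← paperF_two_sub_eq ⟨hp0, hp1⟩ hκ1] at hchernoff
  rw [ENNReal.le_ofReal_iff_toReal_le (measure_ne_top _ _) (measureReal_nonneg.trans hchernoff)]
  exact hchernoff
end

section
/- Fix $p\in(0,1)$. There exists a unique $s_0\in(0,1)$ satisfying $(1-p)(2-s_0)=e^{1/s_0}(1-s_0)$. Moreover, if $p>1/2$ then $s_0>2-1/p$, and if $p_0<p\le 1/2$ then $s_0>\frac{1-2p}{1-p}$, where $p_0\in(0,1/2)$ is the unique solution of $\log((1-p)/p)=(1-p)/(1-2p)$. -/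
/-!
Writing `c = 1 - p`, the equation `c (2 - s) = e^{1/s} (1 - s)` says `expRatio s = c` for
`expRatio s = e^{1/s} (1 - s) / (2 - s)`. On `(0, 1]` this is a product of a positive and a
nonnegative strictly decreasing factor, so it is strictly decreasing, from `e² / 3 > 1` at `1/2`
to `0` at `1`; hence the root `s₀` exists, is unique, and `a < s₀` as soon as `c < expRatio a`.
At `a = 2 - 1/p` one finds `expRatio a = e^{1/a} (1 - p) > 1 - p`. At `a = (1 - 2p)/(1 - p)` one
finds `expRatio a = e^{(1-p)/(1-2p)} p`, which exceeds `1 - p` exactly when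
`log ((1 - p)/p) < (1 - p)/(1 - 2p)`; the left side decreases and the right side increases in `p`,
and they agree at `p₀`.
-/

open Real Set

noncomputable def expRatio (s : ℝ) : ℝ := exp (1 / s) * ((1 - s) / (2 - s))

lemma strictAntiOn_expRatio : StrictAntiOn expRatio (Ioc 0 1) := by
  intro x ⟨hx0, hx1⟩ y ⟨hy0, hy1⟩ hxy
  have hexp : exp (1 / y) < exp (1 / x) := exp_lt_exp.2 (one_div_lt_one_div_of_lt hx0 hxy)
  have hratio : (1 - y) / (2 - y) < (1 - x) / (2 - x) := by
    rw [div_lt_div_iff₀ (by linarith) (by linarith)]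
    linarith
  exact mul_lt_mul'' hexp hratio (exp_pos _).le (div_nonneg (by linarith) (by linarith))

lemma continuousOn_expRatio : ContinuousOn expRatio (Icc (1 / 2) 1) := by
  intro x ⟨hx0, hx1⟩
  unfold expRatio
  fun_prop (disch := linarith)

lemma expRatio_one : expRatio 1 = 0 := by
  simp [expRatio]

lemma one_lt_expRatio_half : 1 < expRatio (1 / 2) := by
  have h : 2 + 1 < exp 2 := add_one_lt_exp (by norm_num)
  norm_num [expRatio]
  linarith

lemma exists_expRatio_eq {c : ℝ} (hc : c ∈ Ioo 0 1) : ∃ s ∈ Ioo (1 / 2) 1, expRatio s = c :=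
  intermediate_value_Ioo' (by norm_num) continuousOn_expRatio
    ⟨expRatio_one ▸ hc.1, hc.2.trans one_lt_expRatio_half⟩

lemma mul_two_sub_eq_iff_expRatio_eq {c s : ℝ} (hs : s < 2) :
    c * (2 - s) = exp (1 / s) * (1 - s) ↔ expRatio s = c := by
  rw [expRatio, mul_div_assoc', div_eq_iff (by linarith), eq_comm]

lemma lt_expRatio_two_sub_inv {p : ℝ} (hp : 1 / 2 < p) (hp1 : p < 1) :
    1 - p < expRatio (2 - 1 / p) := by
  have ha : 0 < 2 - 1 / p := by
    rw [sub_pos, div_lt_iff₀ (by linarith)]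
    linarith
  have hratio : (1 - (2 - 1 / p)) / (2 - (2 - 1 / p)) = 1 - p := by
    field_simp
    ring
  rw [expRatio, hratio]
  exact lt_mul_left (by linarith) (one_lt_exp_iff.2 (one_div_pos.2 ha))

lemma expRatio_one_sub_two_mul_div {p : ℝ} (hp : p < 1 / 2) :
    expRatio ((1 - 2 * p) / (1 - p)) = exp ((1 - p) / (1 - 2 * p)) * p := by
  have h1 : 1 - p ≠ 0 := by linarith
  have h2 : 1 - 2 * p ≠ 0 := by linarith
  rw [expRatio, one_div_div]
  congr 1
  field_simp
  ring

lemma strictAntiOn_log_one_sub_div : StrictAntiOn (fun x : ℝ => log ((1 - x) / x)) (Ioo 0 1) := by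
  intro x ⟨hx0, hx1⟩ y ⟨hy0, hy1⟩ hxy
  apply log_lt_log (div_pos (by linarith) hy0)
  rw [div_lt_div_iff₀ hy0 hx0]
  nlinarith

lemma strictMonoOn_one_sub_div_one_sub_two_mul :
    StrictMonoOn (fun x : ℝ => (1 - x) / (1 - 2 * x)) (Iio (1 / 2)) := by
  intro x hx y hy hxy
  simp only [mem_Iio] at hx hy
  rw [div_lt_div_iff₀ (by linarith) (by linarith)]
  nlinarith

lemma lt_expRatio_one_sub_two_mul_div {p p₀ : ℝ} (hp₀ : p₀ ∈ Ioo 0 (1 / 2))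
    (hp₀eq : log ((1 - p₀) / p₀) = (1 - p₀) / (1 - 2 * p₀)) (hp₀p : p₀ < p) (hp : p < 1 / 2) :
    1 - p < expRatio ((1 - 2 * p) / (1 - p)) := by
  have hp0 : 0 < p := hp₀.1.trans hp₀p
  have hlog : log ((1 - p) / p) < (1 - p) / (1 - 2 * p) :=
    calc log ((1 - p) / p)
        < log ((1 - p₀) / p₀) :=
          strictAntiOn_log_one_sub_div ⟨hp₀.1, by linarith [hp₀.2]⟩ ⟨hp0, by linarith⟩ hp₀p
      _ = (1 - p₀) / (1 - 2 * p₀) := hp₀eq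
      _ < (1 - p) / (1 - 2 * p) := strictMonoOn_one_sub_div_one_sub_two_mul hp₀.2 hp hp₀p
  rw [expRatio_one_sub_two_mul_div hp, ← div_lt_iff₀ hp0]
  exact (log_lt_iff_lt_exp (div_pos (by linarith) hp0)).1 hlog

theorem stmt_8 (p p₀ : ℝ) (hp : p ∈ Set.Ioo (0 : ℝ) 1)
    (hp₀ : p₀ ∈ Set.Ioo (0 : ℝ) (1 / 2))
    (hp₀eq : Real.log ((1 - p₀) / p₀) = (1 - p₀) / (1 - 2 * p₀)) :
    ∃ s₀ ∈ Set.Ioo (0 : ℝ) 1,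
      (1 - p) * (2 - s₀) = Real.exp (1 / s₀) * (1 - s₀) ∧
      (∀ s ∈ Set.Ioo (0 : ℝ) 1,
        (1 - p) * (2 - s) = Real.exp (1 / s) * (1 - s) → s = s₀) ∧
      (1 / 2 < p → 2 - 1 / p < s₀) ∧
      (p₀ < p → p ≤ 1 / 2 → (1 - 2 * p) / (1 - p) < s₀) := by
  obtain ⟨hp0, hp1⟩ := hp
  obtain ⟨s₀, ⟨hs₀half, hs₀one⟩, hs₀⟩ := exists_expRatio_eq (c := 1 - p) ⟨by linarith, by linarith⟩
  have hs₀mem : s₀ ∈ Ioc 0 1 := ⟨by linarith, hs₀one.le⟩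
  have lt_root : ∀ a ∈ Ioc 0 1, 1 - p < expRatio a → a < s₀ := fun a ha h =>
    (strictAntiOn_expRatio.lt_iff_gt hs₀mem ha).1 (hs₀ ▸ h)
  refine ⟨s₀, ⟨by linarith, hs₀one⟩, (mul_two_sub_eq_iff_expRatio_eq (by linarith)).2 hs₀,
    fun s hs heq => ?_, fun hp2 => ?_, fun hp₀p hp2 => ?_⟩
  · have hs2 : s < 2 := by linarith [hs.2]
    exact strictAntiOn_expRatio.injOn ⟨hs.1, hs.2.le⟩ hs₀mem
      (((mul_two_sub_eq_iff_expRatio_eq hs2).1 heq).trans hs₀.symm)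
  · refine lt_root _ ⟨?_, ?_⟩ (lt_expRatio_two_sub_inv hp2 hp1)
    · rw [sub_pos, div_lt_iff₀ hp0]; linarith
    · rw [sub_le_comm, le_div_iff₀ hp0]; linarith
  · rcases hp2.lt_or_eq with hp2 | rfl
    · refine lt_root _ ⟨div_pos (by linarith) (by linarith), ?_⟩
        (lt_expRatio_one_sub_two_mul_div hp₀ hp₀eq hp₀p hp2)
      rw [div_le_one (by linarith)]; linarith
    · norm_num; linarith
end

section
/- Let $\omega>0$ and let $\tau:[0,\omega]\to\mathbb{R}$ be a positive function differentiable on $(0,\omega)$ satisfying $\alpha(x)+\chi(\tau(x))=0$ for all $x\in[0,\omega]$, where $\alpha$ is convex and increasing and $\chi$ is convex and decreasing. Suppose there exists $x^*\in(0,\omega)$ with $\tau'(x^*)=\tau(x^*)/x^*$. Then $\frac{x^*}{\tau(x^*)}\ge\frac{y}{\tau(y)}$ for all $y\in[0,\omega]$. -/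
/-!
From `α x + χ (τ x) = 0` with `α`, `χ` convex and `χ` strictly decreasing, `τ` is convex. A convex
function lies above its tangent lines, and the tangent at `x*` passes through the origin because
`τ'(x*) = τ(x*) / x*`. Hence `τ y ≥ (τ(x*) / x*) y`, i.e. `y / τ y ≤ x* / τ(x*)`.
-/

open Set

theorem convexOn_of_add_comp_eq_zero {E : Type*} [AddCommGroup E] [Module ℝ E] {s : Set E}
    {α τ : E → ℝ} {χ : ℝ → ℝ} (hα : ConvexOn ℝ s α) (hχ : ConvexOn ℝ univ χ)
    (hχanti : StrictAnti χ) (h : ∀ x ∈ s, α x + χ (τ x) = 0) : ConvexOn ℝ s τ := by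
  refine ⟨hα.1, fun x hx y hy a b ha hb hab => ?_⟩
  have hχτ : χ (a • τ x + b • τ y) ≤ χ (τ (a • x + b • y)) :=
    calc χ (a • τ x + b • τ y) ≤ a • χ (τ x) + b • χ (τ y) :=
          hχ.2 (mem_univ _) (mem_univ _) ha hb hab
      _ = -(a • α x + b • α y) := by
          simp only [smul_eq_mul, eq_neg_add_of_add_eq (h x hx), eq_neg_add_of_add_eq (h y hy)]
          ring
      _ ≤ -α (a • x + b • y) := neg_le_neg (hα.2 hx hy ha hb hab)
      _ = χ (τ (a • x + b • y)) := neg_eq_of_add_eq_zero_right (h _ (hα.1 hx hy ha hb hab))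
  exact hχanti.le_iff_ge.mp hχτ

theorem ConvexOn.add_deriv_mul_sub_le {S : Set ℝ} {f : ℝ → ℝ} {x y : ℝ} (hf : ConvexOn ℝ S f)
    (hx : x ∈ S) (hy : y ∈ S) (hfx : DifferentiableAt ℝ f x) :
    f x + deriv f x * (y - x) ≤ f y := by
  rcases lt_trichotomy y x with hyx | rfl | hxy
  · have := hf.slope_le_deriv hy hx hyx hfx
    rw [slope_def_field, div_le_iff₀ (sub_pos.mpr hyx)] at this
    linarith
  · simp
  · have := hf.deriv_le_slope hx hy hxy hfx
    rw [slope_def_field, le_div_iff₀ (sub_pos.mpr hxy)] at this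
    linarith

theorem stmt_10_general (ω : ℝ) (τ α χ : ℝ → ℝ)
    (hτpos : ∀ x ∈ Set.Icc 0 ω, 0 < τ x)
    (hτdiff : ∀ x ∈ Set.Ioo 0 ω, DifferentiableAt ℝ τ x)
    (hαconv : ConvexOn ℝ Set.univ α)
    (hχconv : ConvexOn ℝ Set.univ χ) (hχanti : StrictAnti χ)
    (heq : ∀ x ∈ Set.Icc 0 ω, α x + χ (τ x) = 0)
    (xs : ℝ) (hxs : xs ∈ Set.Ioo 0 ω) (hder : deriv τ xs = τ xs / xs) :
    ∀ y ∈ Set.Icc 0 ω, y / τ y ≤ xs / τ xs := by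
  intro y hy
  have hxsI : xs ∈ Icc 0 ω := Ioo_subset_Icc_self hxs
  have hτ : ConvexOn ℝ (Icc 0 ω) τ :=
    convexOn_of_add_comp_eq_zero (hαconv.subset (subset_univ _) (convex_Icc 0 ω)) hχconv hχanti heq
  have htangent := hτ.add_deriv_mul_sub_le hxsI hy (hτdiff xs hxs)
  have hline : τ xs / xs * y ≤ τ y := by
    rw [hder, mul_sub, div_mul_cancel₀ _ hxs.1.ne'] at htangent
    linarith
  rw [div_le_div_iff₀ (hτpos y hy) (hτpos xs hxsI)]
  calc y * τ xs = xs * (τ xs / xs * y) := by field_simp [hxs.1.ne']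
    _ ≤ xs * τ y := by gcongr; exact hxs.1.le

theorem stmt_10 (ω : ℝ) (hω : 0 < ω) (τ α χ : ℝ → ℝ)
    (hτpos : ∀ x ∈ Set.Icc 0 ω, 0 < τ x)
    (hτdiff : ∀ x ∈ Set.Ioo 0 ω, DifferentiableAt ℝ τ x)
    (hαconv : ConvexOn ℝ Set.univ α) (hαmono : Monotone α)
    (hχconv : ConvexOn ℝ Set.univ χ) (hχanti : StrictAnti χ)
    (heq : ∀ x ∈ Set.Icc 0 ω, α x + χ (τ x) = 0)
    (xs : ℝ) (hxs : xs ∈ Set.Ioo 0 ω) (hder : deriv τ xs = τ xs / xs) :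
    ∀ y ∈ Set.Icc 0 ω, y / τ y ≤ xs / τ xs :=
  stmt_10_general ω τ α χ hτpos hτdiff hαconv hχconv hχanti heq xs hxs hder
end

section
/- Under the hypotheses of the previous lemma (positive $\tau$ on $[0,\omega]$ with $\alpha(x)+\chi(\tau(x))=0$, $\alpha$ convex increasing, $\chi$ convex strictly decreasing), the function $\tau$ is convex and increasing on $[0,\omega]$. -/
open Set

theorem convexOn_of_concaveOn_comp_strictAnti {E : Type*} [AddCommGroup E] [Module ℝ E]
    {s : Set E} {τ : E → ℝ} {χ : ℝ → ℝ} (hχconv : ConvexOn ℝ univ χ) (hχanti : StrictAnti χ)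
    (hcomp : ConcaveOn ℝ s (χ ∘ τ)) : ConvexOn ℝ s τ := by
  refine ⟨hcomp.1, fun x hx y hy a b ha hb hab => hχanti.le_iff_ge.mp ?_⟩
  calc χ (a • τ x + b • τ y) ≤ a • χ (τ x) + b • χ (τ y) := hχconv.2 trivial trivial ha hb hab
    _ ≤ χ (τ (a • x + b • y)) := hcomp.2 hx hy ha hb hab

theorem monotoneOn_of_antitoneOn_comp_strictAnti {α β γ : Type*} [Preorder α] [LinearOrder β]
    [Preorder γ] {s : Set α} {f : α → β} {g : β → γ} (hg : StrictAnti g)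
    (hcomp : AntitoneOn (g ∘ f) s) : MonotoneOn f s :=
  fun _ hx _ hy hxy => hg.le_iff_ge.mp (hcomp hx hy hxy)

theorem stmt_11_general (ω : ℝ) (τ α χ : ℝ → ℝ)
    (hαconv : ConvexOn ℝ Set.univ α) (hαmono : Monotone α)
    (hχconv : ConvexOn ℝ Set.univ χ) (hχanti : StrictAnti χ)
    (heq : ∀ x ∈ Set.Icc 0 ω, α x + χ (τ x) = 0) :
    ConvexOn ℝ (Set.Icc 0 ω) τ ∧ MonotoneOn τ (Set.Icc 0 ω) := by
  have hχτ : EqOn (-α) (χ ∘ τ) (Icc 0 ω) := fun x hx =>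
    (eq_neg_of_add_eq_zero_right (heq x hx)).symm
  refine ⟨convexOn_of_concaveOn_comp_strictAnti hχconv hχanti ?_,
    monotoneOn_of_antitoneOn_comp_strictAnti hχanti ?_⟩
  · exact (hαconv.neg.subset (subset_univ _) (convex_Icc 0 ω)).congr hχτ
  · exact (hαmono.neg.antitoneOn _).congr hχτ

theorem stmt_11 (ω : ℝ) (hω : 0 < ω) (τ α χ : ℝ → ℝ)
    (hτpos : ∀ x ∈ Set.Icc 0 ω, 0 < τ x)
    (hαconv : ConvexOn ℝ Set.univ α) (hαmono : Monotone α)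
    (hχconv : ConvexOn ℝ Set.univ χ) (hχanti : StrictAnti χ)
    (heq : ∀ x ∈ Set.Icc 0 ω, α x + χ (τ x) = 0) :
    ConvexOn ℝ (Set.Icc 0 ω) τ ∧ MonotoneOn τ (Set.Icc 0 ω) :=
  stmt_11_general ω τ α χ hαconv hαmono hχconv hχanti heq
end
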